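/- Let X ⊆ E be a closed convex subset of a finite-dimensional real normed space, let f and g be strongly convex on X with the same parameter μ > 0 (i.e. f(y) ≥ f(x) + ⟨∇f(x), y−x⟩ + (μ/2)‖y−x‖_E² for all x,y ∈ X and all subgradients, and similarly for g), and let x_* be a solution of the regular problem min{ f(x) : x ∈ X, g(x) ≤ 0 } (there exists x̄ in the relative interior of X with g(x̄) < 0). If a point x̃ ∈ X satisfies f(x̃) − f(x_*) ≤ ε and g(x̃) ≤ ε, then (μ/2)‖x̃ − x_*‖_E² ≤ ε. -/

import Mathlib

/-!
Since `x_*` solves the constrained problem, it minimises the penalty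
`h = max (f, g + f x_*)` over all of `X`, and the hypotheses on `x̃` say `h x̃ ≤ f x_* + ε`.
A maximum of `μ`-strongly convex functions is `μ`-strongly convex, and `f`, `g` are strongly
convex in the usual sense on the relative interior of `X`, where subgradients exist. So the
quadratic growth `h x_* + μ/2 ‖x - x_*‖² ≤ h x` of a strongly convex function at its minimiser
gives the claim; it extends from the relative interior to all of `X` by pulling segments
slightly towards a relative interior point.
-/

/-- `p` is a subgradient of `f` at `x` relative to the set `X`. -/
def IsSubgradOn {E : Type*} [NormedAddCommGroup E] [NormedSpace ℝ E]
    (X : Set E) (f : E → ℝ) (x : E) (p : E →L[ℝ] ℝ) : Prop :=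
  ∀ y ∈ X, f x + p (y - x) ≤ f y

open Set Topology

theorem ConvexOn.exists_isSubgradOn_of_mem_interior {W : Type*} [NormedAddCommGroup W]
    [NormedSpace ℝ W] [FiniteDimensional ℝ W] {S : Set W} {F : W → ℝ} (hF : ConvexOn ℝ S F)
    {x : W} (hx : x ∈ interior S) : ∃ p : W →L[ℝ] ℝ, IsSubgradOn S F x p := by
  set T : Set (W × ℝ) := {q | q.1 ∈ S ∧ F q.1 ≤ q.2}
  have hT : Convex ℝ T := hF.convex_epigraph
  have habove : (x, F x + 1) ∈ interior T := by
    have hcont : ContinuousAt F x :=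
      hF.continuousOn_interior.continuousAt (isOpen_interior.mem_nhds hx)
    have hnhds : ∀ᶠ q : W × ℝ in 𝓝 (x, F x + 1), q.1 ∈ S ∧ F q.1 < q.2 :=
      ((continuous_fst.tendsto (x, F x + 1)).eventually_mem
        (mem_interior_iff_mem_nhds.1 hx)).and <|
        (hcont.comp continuous_fst.continuousAt).eventually_lt continuous_snd.continuousAt
          (by simp)
    exact mem_interior_iff_mem_nhds.2 (hnhds.mono fun q hq => ⟨hq.1, hq.2.le⟩)
  have hboundary : (x, F x) ∉ interior T := fun h => by
    obtain ⟨ε, hε, hball⟩ := Metric.mem_nhds_iff.1 (mem_interior_iff_mem_nhds.1 h)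
    have : (x, F x - ε / 2) ∈ T := hball (by simp [Prod.dist_eq, abs_of_pos hε, hε])
    linarith [this.2]
  obtain ⟨φ, hφ⟩ := geometric_hahn_banach_open_point hT.interior isOpen_interior hboundary
  have hφT : ∀ q ∈ T, φ q ≤ φ (x, F x) := by
    have : closure (interior T) ⊆ {q | φ q ≤ φ (x, F x)} :=
      closure_minimal (fun q hq => (hφ q hq).le) (isClosed_le φ.continuous continuous_const)
    rw [hT.closure_interior_eq_closure_of_nonempty_interior ⟨_, habove⟩] at this
    exact fun q hq => this (subset_closure hq)
  have hsplit : ∀ w r, φ (w, r) = φ (w, 0) + r * φ (0, 1) := fun w r => by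
    rw [← smul_eq_mul, ← map_smul, ← map_add, Prod.smul_mk, smul_zero, smul_eq_mul, mul_one,
      Prod.mk_add_mk, add_zero, zero_add]
  have hβ : φ (0, 1) < 0 := by
    have := hφ _ habove
    rw [hsplit x, hsplit x (F x)] at this
    linarith
  refine ⟨(-φ (0, 1))⁻¹ • φ.comp (ContinuousLinearMap.inl ℝ W ℝ), fun y hy => ?_⟩
  have hy' := hφT (y, F y) ⟨hy, le_rfl⟩
  rw [hsplit y, hsplit x] at hy'
  have hlin : φ (y - x, 0) = φ (y, 0) - φ (x, 0) := by
    rw [← map_sub, Prod.mk_sub_mk, sub_zero]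
  have : (-φ (0, 1))⁻¹ * φ (y - x, 0) ≤ F y - F x := by
    rw [inv_mul_le_iff₀ (neg_pos.2 hβ)]
    nlinarith
  simpa [hlin] using this

section IntrinsicInterior

variable {E : Type*} [NormedAddCommGroup E] [NormedSpace ℝ E] {X : Set E}

theorem intrinsicInterior_eq_image_interior {y : E} (hy : y ∈ affineSpan ℝ X) :
    intrinsicInterior ℝ X = (fun w : (affineSpan ℝ X).direction => y + (w : E)) ''
      interior {w : (affineSpan ℝ X).direction | y + (w : E) ∈ X} := by
  have : Nonempty (affineSpan ℝ X) := ⟨⟨y, hy⟩⟩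
  let e := (AffineIsometryEquiv.vaddConst ℝ (⟨y, hy⟩ : affineSpan ℝ X)).toHomeomorph
  have he : ∀ w, ((e w : affineSpan ℝ X) : E) = y + w := fun w => add_comm _ _
  have hpre : e ⁻¹' ((↑) ⁻¹' X) = {w : (affineSpan ℝ X).direction | y + (w : E) ∈ X} := by
    ext w
    simp only [mem_preimage, he, mem_ofPred_eq]
  rw [intrinsicInterior, ← e.image_preimage (interior _), e.preimage_interior, image_image, hpre]
  simp only [he]

theorem Convex.combo_self_intrinsicInterior_mem_intrinsicInterior (hX : Convex ℝ X) {x y : E}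
    (hx : x ∈ X) (hy : y ∈ intrinsicInterior ℝ X) {a b : ℝ} (ha : 0 ≤ a) (hb : 0 < b)
    (hab : a + b = 1) : a • x + b • y ∈ intrinsicInterior ℝ X := by
  rw [intrinsicInterior_eq_image_interior (subset_affineSpan ℝ X hx)] at hy ⊢
  obtain ⟨w, hw, rfl⟩ := hy
  set S := {w : (affineSpan ℝ X).direction | x + (w : E) ∈ X}
  have hS : Convex ℝ S := (hX.translate_preimage_right x).linear_preimage (Submodule.subtype _)
  have h0 : 0 ∈ S := by simpa [S] using hx
  refine ⟨b • w, by simpa using hS.combo_self_interior_mem_interior h0 hw ha hb hab, ?_⟩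
  obtain rfl : a = 1 - b := by linarith
  simp only [SetLike.val_smul]
  module

protected theorem Convex.intrinsicInterior (hX : Convex ℝ X) :
    Convex ℝ (intrinsicInterior ℝ X) := by
  intro u hu v hv a b ha hb hab
  rcases hb.eq_or_lt with rfl | hb
  · simpa [show a = 1 by linarith] using hu
  · exact hX.combo_self_intrinsicInterior_mem_intrinsicInterior (intrinsicInterior_subset hu) hv
      ha hb hab

theorem ConvexOn.exists_isSubgradOn_of_mem_intrinsicInterior [FiniteDimensional ℝ E]
    {f : E → ℝ} (hf : ConvexOn ℝ X f) {z : E} (hz : z ∈ intrinsicInterior ℝ X) :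
    ∃ p : E →L[ℝ] ℝ, IsSubgradOn X f z p := by
  set D := (affineSpan ℝ X).direction
  have hzX : z ∈ X := intrinsicInterior_subset hz
  have h0 : (0 : D) ∈ interior {w : D | z + (w : E) ∈ X} := by
    rw [intrinsicInterior_eq_image_interior (subset_affineSpan ℝ X hzX)] at hz
    obtain ⟨w, hw, hwz⟩ := hz
    obtain rfl : w = 0 := by simpa using hwz
    exact hw
  obtain ⟨q, hq⟩ :=
    ((hf.translate_right z).comp_linearMap D.subtype).exists_isSubgradOn_of_mem_interior h0
  obtain ⟨p, hpq, -⟩ := exists_extension_norm_eq D q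
  refine ⟨p, fun y hy => ?_⟩
  have hyz : y - z ∈ D :=
    AffineSubspace.vsub_mem_direction (subset_affineSpan ℝ X hy) (subset_affineSpan ℝ X hzX)
  rw [hpq ⟨y - z, hyz⟩]
  simpa using hq ⟨y - z, hyz⟩ (by simpa using hy)

theorem ConvexOn.strongConvexOn_intrinsicInterior_of_isSubgradOn [FiniteDimensional ℝ E]
    {f : E → ℝ} {μ : ℝ} (hf : ConvexOn ℝ X f)
    (hsc : ∀ x ∈ X, ∀ p : E →L[ℝ] ℝ, IsSubgradOn X f x p →
      ∀ y ∈ X, f x + p (y - x) + μ / 2 * ‖y - x‖ ^ 2 ≤ f y) :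
    StrongConvexOn (intrinsicInterior ℝ X) μ f := by
  refine ⟨hf.1.intrinsicInterior, fun u hu v hv a b ha hb hab => ?_⟩
  have hz := hf.1.intrinsicInterior hu hv ha hb hab
  obtain ⟨p, hp⟩ := hf.exists_isSubgradOn_of_mem_intrinsicInterior hz
  have hzX := intrinsicInterior_subset hz
  have hu' := hsc _ hzX p hp u (intrinsicInterior_subset hu)
  have hv' := hsc _ hzX p hp v (intrinsicInterior_subset hv)
  obtain rfl : a = 1 - b := by linarith
  have hdu : u - ((1 - b) • u + b • v) = b • (u - v) := by module
  have hdv : v - ((1 - b) • u + b • v) = -(1 - b) • (u - v) := by module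
  rw [hdu, map_smul, norm_smul, Real.norm_of_nonneg hb] at hu'
  rw [hdv, map_smul, norm_smul, norm_neg, Real.norm_of_nonneg ha] at hv'
  simp only [smul_eq_mul] at hu' hv' ⊢
  nlinarith [mul_le_mul_of_nonneg_left hu' ha, mul_le_mul_of_nonneg_left hv' hb]

theorem IsMinOn.add_sq_norm_sub_le {φ : E → ℝ} {m : ℝ} {xs v : E} (hmin : IsMinOn φ X xs)
    (hφ : ConvexOn ℝ X φ) (hsc : StrongConvexOn (intrinsicInterior ℝ X) m φ)
    (hne : (intrinsicInterior ℝ X).Nonempty) (hxs : xs ∈ X) (hv : v ∈ X) :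
    φ xs + m / 2 * ‖v - xs‖ ^ 2 ≤ φ v := by
  obtain ⟨c, hc⟩ := hne
  have hcX := intrinsicInterior_subset hc
  -- Pull both endpoints towards `c` by `t ^ 2`: the segment between them then lies in the
  -- intrinsic interior, and this costs only `o(t)`, which disappears after dividing by `t`.
  have key : ∀ t ∈ Ioo (0 : ℝ) 1, (1 - t) * (m / 2 * ((1 - t ^ 2) ^ 2 * ‖v - xs‖ ^ 2)) ≤
      (1 - t ^ 2) * (φ v - φ xs) + t * (φ c - φ xs) := by
    rintro t ⟨ht0, ht1⟩
    have hr0 : 0 < t ^ 2 := by positivity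
    have hr1 : 0 ≤ 1 - t ^ 2 := by nlinarith
    have ht1' : 0 ≤ 1 - t := sub_nonneg.2 ht1.le
    have hu := hφ.1.combo_self_intrinsicInterior_mem_intrinsicInterior hxs hc hr1 hr0 (by ring)
    have hw := hφ.1.combo_self_intrinsicInterior_mem_intrinsicInterior hv hc hr1 hr0 (by ring)
    have hz := hsc.2 hu hw ht1' ht0.le (sub_add_cancel 1 t)
    have hmz := isMinOn_iff.1 hmin _ (intrinsicInterior_subset
      (hφ.1.intrinsicInterior hu hw ht1' ht0.le (sub_add_cancel 1 t)))
    have hφu := hφ.2 hxs hcX hr1 hr0.le (by ring)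
    have hφw := hφ.2 hv hcX hr1 hr0.le (by ring)
    have hnorm : ‖((1 - t ^ 2) • xs + t ^ 2 • c) - ((1 - t ^ 2) • v + t ^ 2 • c)‖ =
        (1 - t ^ 2) * ‖v - xs‖ := by
      rw [show ((1 - t ^ 2) • xs + t ^ 2 • c) - ((1 - t ^ 2) • v + t ^ 2 • c) =
        (1 - t ^ 2) • (xs - v) by module, norm_smul, Real.norm_of_nonneg hr1, norm_sub_rev]
    rw [hnorm] at hz
    simp only [smul_eq_mul] at hz hφu hφw
    refine le_of_mul_le_mul_left ?_ ht0
    nlinarith [mul_le_mul_of_nonneg_left hφu ht1', mul_le_mul_of_nonneg_left hφw ht0.le]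
  have := le_on_closure key (by fun_prop) (by fun_prop)
    (by rw [closure_Ioo zero_ne_one]; exact left_mem_Icc.2 zero_le_one)
  norm_num at this
  linarith

end IntrinsicInterior

section UniformConvexOn

variable {E : Type*} [NormedAddCommGroup E] [NormedSpace ℝ E] {s : Set E} {φ : ℝ → ℝ}
  {f g : E → ℝ}

theorem UniformConvexOn.sup (hf : UniformConvexOn s φ f) (hg : UniformConvexOn s φ g) :
    UniformConvexOn s φ (f ⊔ g) := by
  refine ⟨hf.1, fun x hx y hy a b ha hb hab => sup_le ?_ ?_⟩
  · refine (hf.2 hx hy ha hb hab).trans ?_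
    gcongr <;> simp
  · refine (hg.2 hx hy ha hb hab).trans ?_
    gcongr <;> simp

theorem UniformConvexOn.add_const (hf : UniformConvexOn s φ f) (c : ℝ) :
    UniformConvexOn s φ (fun x => f x + c) := by
  refine ⟨hf.1, fun x hx y hy a b ha hb hab => ?_⟩
  have := hf.2 hx hy ha hb hab
  simp only [smul_eq_mul] at this ⊢
  linear_combination this - c * hab

end UniformConvexOn

theorem strongly_convex_func_to_arg_general
    {E : Type*} [NormedAddCommGroup E] [NormedSpace ℝ E] [FiniteDimensional ℝ E]
    (X : Set E)
    (f g : E → ℝ) (hf : ConvexOn ℝ X f) (hg : ConvexOn ℝ X g)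
    (μ : ℝ)
    (hfsc : ∀ x ∈ X, ∀ p : E →L[ℝ] ℝ, IsSubgradOn X f x p →
      ∀ y ∈ X, f x + p (y - x) + μ / 2 * ‖y - x‖ ^ 2 ≤ f y)
    (hgsc : ∀ x ∈ X, ∀ p : E →L[ℝ] ℝ, IsSubgradOn X g x p →
      ∀ y ∈ X, g x + p (y - x) + μ / 2 * ‖y - x‖ ^ 2 ≤ g y)
    (xs : E) (hxs : xs ∈ X) (hgxs : g xs ≤ 0)
    (hopt : ∀ y ∈ X, g y ≤ 0 → f xs ≤ f y)
    (ε : ℝ) (xt : E) (hxt : xt ∈ X)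
    (hfε : f xt - f xs ≤ ε) (hgε : g xt ≤ ε) :
    μ / 2 * ‖xt - xs‖ ^ 2 ≤ ε := by
  set h : E → ℝ := f ⊔ fun x => g x + f xs
  have hhxs : h xs = f xs := sup_eq_left.2 (by linarith)
  have hmin : IsMinOn h X xs := isMinOn_iff.2 fun y hy => by
    rw [hhxs]
    by_cases hgy : g y ≤ 0
    · exact (hopt y hy hgy).trans le_sup_left
    · exact le_sup_of_le_right (by linarith)
  have hsc : StrongConvexOn (intrinsicInterior ℝ X) μ h :=
    UniformConvexOn.sup (hf.strongConvexOn_intrinsicInterior_of_isSubgradOn hfsc)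
      ((hg.strongConvexOn_intrinsicInterior_of_isSubgradOn hgsc).add_const (f xs))
  have hgrowth := hmin.add_sq_norm_sub_le (hf.sup (hg.add_const (f xs))) hsc
    (Set.Nonempty.intrinsicInterior hf.1 ⟨xs, hxs⟩) hxs hxt
  have hxt' : h xt ≤ f xs + ε := sup_le (by linarith) (by linarith)
  linarith

/-- If `f` and `g` are `μ`-strongly convex on `X`, the problem
`min {f(x) : x ∈ X, g(x) ≤ 0}` is regular (Slater point in the relative interior),
`x_*` is a solution of this problem, and `x̃ ∈ X` satisfies
`f(x̃) − f(x_*) ≤ ε` and `g(x̃) ≤ ε`, then `μ/2 ‖x̃ − x_*‖² ≤ ε`. -/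
theorem strongly_convex_func_to_arg
    {E : Type*} [NormedAddCommGroup E] [NormedSpace ℝ E] [FiniteDimensional ℝ E]
    (X : Set E) (hXcl : IsClosed X) (hXconv : Convex ℝ X)
    (f g : E → ℝ) (hf : ConvexOn ℝ X f) (hg : ConvexOn ℝ X g)
    (μ : ℝ) (hμ : 0 < μ)
    (hfsc : ∀ x ∈ X, ∀ p : E →L[ℝ] ℝ, IsSubgradOn X f x p →
      ∀ y ∈ X, f x + p (y - x) + μ / 2 * ‖y - x‖ ^ 2 ≤ f y)
    (hgsc : ∀ x ∈ X, ∀ p : E →L[ℝ] ℝ, IsSubgradOn X g x p →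
      ∀ y ∈ X, g x + p (y - x) + μ / 2 * ‖y - x‖ ^ 2 ≤ g y)
    (xbar : E) (hxbar : xbar ∈ intrinsicInterior ℝ X) (hgxbar : g xbar < 0)
    (xs : E) (hxs : xs ∈ X) (hgxs : g xs ≤ 0)
    (hopt : ∀ y ∈ X, g y ≤ 0 → f xs ≤ f y)
    (ε : ℝ) (xt : E) (hxt : xt ∈ X)
    (hfε : f xt - f xs ≤ ε) (hgε : g xt ≤ ε) :
    μ / 2 * ‖xt - xs‖ ^ 2 ≤ ε :=
  strongly_convex_func_to_arg_general X f g hf hg μ hfsc hgsc xs hxs hgxs hopt ε xt hxt hfε hgε
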